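/- Fix a matrix C ∈ ℝ^{ℓ×d} with |X_i Cᵀ C X_jᵀ| ≤ 1 for all i, j ∈ [n], fix v ∈ {−1,+1}^m, y ∈ ℝ^n, and η > 0. Let B(t+1) be obtained from B(t) by one gradient-descent step with learning rate η on Φ(B) = ½‖y − u‖². Then ‖u(t+1) − u(t)‖² ≤ η²·n²·‖y − u(t)‖². -/

import Mathlib

open MeasureTheory ProbabilityTheory Real
open scoped NNReal

noncomputable section

/-- Real-valued indicator of a proposition. -/
def ind (P : Prop) : ℝ := @ite _ P (Classical.dec P) 1 0

/-- Dot product of two real vectors. -/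
def dot {p : ℕ} (x y : Fin p → ℝ) : ℝ := ∑ i, x i * y i

/-- Matrix-vector product. -/
def mvec {a b : ℕ} (M : Fin a → Fin b → ℝ) (x : Fin b → ℝ) : Fin a → ℝ := fun i => dot (M i) x

/-- Vector-matrix product. -/
def vmul {a b : ℕ} (x : Fin a → ℝ) (M : Fin a → Fin b → ℝ) : Fin b → ℝ :=
  fun j => ∑ i, x i * M i j

/-- Euclidean norm of a real vector. -/
def eunorm {p : ℕ} (x : Fin p → ℝ) : ℝ := Real.sqrt (∑ i, x i ^ 2)

/-- ℓ²→ℓ² operator (spectral) norm of a matrix. -/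
def specNorm {a b : ℕ} (M : Fin a → Fin b → ℝ) : ℝ :=
  sSup {c : ℝ | ∃ x : Fin b → ℝ, ∑ j, x j ^ 2 ≤ 1 ∧ c = eunorm (mvec M x)}

/-- Smallest eigenvalue of a (symmetric) matrix, as the infimum of the quadratic form
over the unit sphere. -/
def lamMin {n : ℕ} (M : Fin n → Fin n → ℝ) : ℝ :=
  sInf {c : ℝ | ∃ x : Fin n → ℝ, ∑ i, x i ^ 2 = 1 ∧ c = dot x (mvec M x)}

/-- Standard Gaussian measure on ℝ^b. -/
def stdGaussian (b : ℕ) : Measure (Fin b → ℝ) := Measure.pi fun _ => gaussianReal 0 1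

/-- Measure on a×b real matrices with i.i.d. centered Gaussian entries of variance `v`. -/
def gaussMatrix (a b : ℕ) (v : ℝ≥0) : Measure (Fin a → Fin b → ℝ) :=
  Measure.pi fun _ => Measure.pi fun _ => gaussianReal 0 v

/-- Uniform measure on {-1, 1} ⊆ ℝ. -/
def signMeasure : Measure ℝ :=
  (PMF.uniformOfFinset ({-1, 1} : Finset ℝ) ⟨-1, by simp⟩).toMeasure

instance : IsProbabilityMeasure signMeasure := by
  unfold signMeasure; infer_instance

/-- Uniform measure on {-1,1}^m. -/
def signVec (m : ℕ) : Measure (Fin m → ℝ) := Measure.pi fun _ => signMeasure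

instance (b : ℕ) : IsProbabilityMeasure (stdGaussian b) := by
  unfold _root_.stdGaussian; infer_instance

instance (a b : ℕ) (v : ℝ≥0) : IsProbabilityMeasure (gaussMatrix a b v) := by
  unfold gaussMatrix; infer_instance

instance (m : ℕ) : IsProbabilityMeasure (signVec m) := by
  unfold signVec; infer_instance

/-- Output of the plain two-layer ReLU network. -/
def netPlain {n d m : ℕ} (X : Fin n → Fin d → ℝ) (v : Fin m → ℝ)
    (W : Fin m → Fin d → ℝ) (i : Fin n) : ℝ :=
  (Real.sqrt m)⁻¹ * ∑ r, v r * max 0 (dot (W r) (X i))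

/-- Gradient of Φ(W) = ½‖y-u‖² w.r.t. the r-th row of W (plain network). -/
def gradPlain {n d m : ℕ} (X : Fin n → Fin d → ℝ) (v : Fin m → ℝ) (y : Fin n → ℝ)
    (W : Fin m → Fin d → ℝ) (r : Fin m) : Fin d → ℝ :=
  fun q => -(Real.sqrt m)⁻¹ *
    ∑ j, (y j - netPlain X v W j) * v r * ind (0 ≤ dot (W r) (X j)) * X j q

/-- NTK matrix of the plain network. -/
def HinfPlain {n d : ℕ} (X : Fin n → Fin d → ℝ) (i j : Fin n) : ℝ :=
  ∫ w, dot (X i) (X j) * ind (0 ≤ dot w (X i)) * ind (0 ≤ dot w (X j)) ∂ stdGaussian d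

/-- `X_i Cᵀ C X_jᵀ`. -/
def dotC {n d ℓ : ℕ} (X : Fin n → Fin d → ℝ) (C : Fin ℓ → Fin d → ℝ) (i j : Fin n) : ℝ :=
  dot (mvec C (X i)) (mvec C (X j))

/-- Output of the input-dimension-reduced two-layer ReLU network. -/
def netFac {n d ℓ m : ℕ} (X : Fin n → Fin d → ℝ) (C : Fin ℓ → Fin d → ℝ)
    (v : Fin m → ℝ) (B : Fin m → Fin ℓ → ℝ) (i : Fin n) : ℝ :=
  (Real.sqrt m)⁻¹ * ∑ r, v r * max 0 (dot (B r) (mvec C (X i)))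

/-- Gradient of Φ(B) = ½‖y-u‖² w.r.t. the r-th row of B (input-dimension-reduced network). -/
def gradFac {n d ℓ m : ℕ} (X : Fin n → Fin d → ℝ) (C : Fin ℓ → Fin d → ℝ)
    (v : Fin m → ℝ) (y : Fin n → ℝ) (B : Fin m → Fin ℓ → ℝ) (r : Fin m) : Fin ℓ → ℝ :=
  fun q => -(Real.sqrt m)⁻¹ *
    ∑ j, (y j - netFac X C v B j) * v r * ind (0 ≤ dot (B r) (mvec C (X j))) * mvec C (X j) q

/-- NTK matrix of the input-dimension-reduced network. -/
def HinfFac {n d ℓ : ℕ} (X : Fin n → Fin d → ℝ) (C : Fin ℓ → Fin d → ℝ) (i j : Fin n) : ℝ :=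
  ∫ b, dotC X C i j * ind (0 ≤ dot b (mvec C (X i))) * ind (0 ≤ dot b (mvec C (X j)))
    ∂ stdGaussian ℓ

/-- Empirical NTK matrix of the input-dimension-reduced network at weights B. -/
def HFac {n d ℓ m : ℕ} (X : Fin n → Fin d → ℝ) (C : Fin ℓ → Fin d → ℝ)
    (B : Fin m → Fin ℓ → ℝ) (i j : Fin n) : ℝ :=
  (m : ℝ)⁻¹ * ∑ r, dotC X C i j * ind (0 ≤ dot (B r) (mvec C (X i))) *
    ind (0 ≤ dot (B r) (mvec C (X j)))

/-- Output of the width-reduced two-layer ReLU network (W = A·B·C). -/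
def netWidth {n d ℓ k m : ℕ} (X : Fin n → Fin d → ℝ) (C : Fin ℓ → Fin d → ℝ)
    (A : Fin m → Fin k → ℝ) (v : Fin m → ℝ) (B : Fin k → Fin ℓ → ℝ) (i : Fin n) : ℝ :=
  (Real.sqrt m)⁻¹ * ∑ r, v r * max 0 (dot (A r) (mvec B (mvec C (X i))))

/-- The sign-indicator vector Z_i(B) of the width-reduced network. -/
def Zvec {n d ℓ k m : ℕ} (X : Fin n → Fin d → ℝ) (C : Fin ℓ → Fin d → ℝ)
    (A : Fin m → Fin k → ℝ) (v : Fin m → ℝ) (B : Fin k → Fin ℓ → ℝ) (i : Fin n) :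
    Fin m → ℝ :=
  fun r => v r * ind (0 ≤ dot (A r) (mvec B (mvec C (X i))))

/-- Gradient of Φ(B) = ½‖y-u‖² w.r.t. B (width-reduced network). -/
def gradWidth {n d ℓ k m : ℕ} (X : Fin n → Fin d → ℝ) (C : Fin ℓ → Fin d → ℝ)
    (A : Fin m → Fin k → ℝ) (v : Fin m → ℝ) (y : Fin n → ℝ)
    (B : Fin k → Fin ℓ → ℝ) : Fin k → Fin ℓ → ℝ :=
  fun a b => -(Real.sqrt m)⁻¹ *
    ∑ j, (y j - netWidth X C A v B j) * vmul (Zvec X C A v B j) A a * mvec C (X j) b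

/-- Empirical NTK matrix of the width-reduced network at weights B. -/
def HWidth {n d ℓ k m : ℕ} (X : Fin n → Fin d → ℝ) (C : Fin ℓ → Fin d → ℝ)
    (A : Fin m → Fin k → ℝ) (v : Fin m → ℝ) (B : Fin k → Fin ℓ → ℝ) (i j : Fin n) : ℝ :=
  (m : ℝ)⁻¹ * dotC X C i j * dot (vmul (Zvec X C A v B i) A) (vmul (Zvec X C A v B j) A)

/-- NTK matrix of the width-reduced network. -/
def HinfWidth {n d ℓ k m : ℕ} (X : Fin n → Fin d → ℝ) (C : Fin ℓ → Fin d → ℝ)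
    (A : Fin m → Fin k → ℝ) (v : Fin m → ℝ) (i j : Fin n) : ℝ :=
  ∫ B, HWidth X C A v B i j ∂ gaussMatrix k ℓ 1

/-!
One gradient step moves each row `B_r` by `(η/√m) Σ_j e_j v_r 1{…} C X_jᵀ`, where `e = y - u`,
so by `|X_j Cᵀ C X_iᵀ| ≤ 1` every pre-activation `B_r · C X_iᵀ` moves by at most `(η/√m) ‖e‖₁`.
The ReLU is 1-Lipschitz and `|v_r| = 1`, so each output moves by at most `(1/√m) · m · (η/√m) ‖e‖₁
= η ‖e‖₁`, and Cauchy–Schwarz `‖e‖₁² ≤ n ‖e‖²` summed over the `n` outputs gives the bound.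
-/

lemma abs_ind_le (P : Prop) : |ind P| ≤ 1 := by
  unfold ind; split_ifs <;> norm_num

lemma abs_relu_sub_relu_le (a b : ℝ) : |max 0 a - max 0 b| ≤ |a - b| := by
  rw [max_comm 0 a, max_comm 0 b]
  exact abs_max_sub_max_le_abs a b 0

lemma dot_sub_smul_left {p : ℕ} (x g z : Fin p → ℝ) (η : ℝ) :
    dot (fun q => x q - η * g q) z - dot x z = -η * dot g z := by
  simp only [dot, Finset.mul_sum, ← Finset.sum_sub_distrib]
  exact Finset.sum_congr rfl fun _ _ => by ring

lemma dot_gradFac_mvec {n d ℓ m : ℕ} (X : Fin n → Fin d → ℝ) (C : Fin ℓ → Fin d → ℝ)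
    (v : Fin m → ℝ) (y : Fin n → ℝ) (B : Fin m → Fin ℓ → ℝ) (r : Fin m) (i : Fin n) :
    dot (gradFac X C v y B r) (mvec C (X i)) = -(Real.sqrt m)⁻¹ *
      ∑ j, (y j - netFac X C v B j) * v r * ind (0 ≤ dot (B r) (mvec C (X j))) * dotC X C j i := by
  simp only [dot, gradFac, dotC, Finset.mul_sum, Finset.sum_mul]
  rw [Finset.sum_comm]
  exact Finset.sum_congr rfl fun _ _ => Finset.sum_congr rfl fun _ _ => by ring

lemma abs_dot_gradFac_mvec_le {n d ℓ m : ℕ} (X : Fin n → Fin d → ℝ) (C : Fin ℓ → Fin d → ℝ)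
    (v : Fin m → ℝ) (y : Fin n → ℝ) (B : Fin m → Fin ℓ → ℝ) (r : Fin m) (i : Fin n)
    (hv : |v r| ≤ 1) (hC : ∀ j, |dotC X C j i| ≤ 1) :
    |dot (gradFac X C v y B r) (mvec C (X i))| ≤
      (Real.sqrt m)⁻¹ * ∑ j, |y j - netFac X C v B j| := by
  rw [dot_gradFac_mvec, abs_mul, abs_neg, abs_of_nonneg (by positivity)]
  gcongr
  refine (Finset.abs_sum_le_sum_abs _ _).trans (Finset.sum_le_sum fun j _ => ?_)
  simp only [abs_mul]
  have hind := abs_ind_le (0 ≤ dot (B r) (mvec C (X j)))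
  have hCj := hC j
  calc _ ≤ |y j - netFac X C v B j| * 1 * 1 * 1 := by gcongr
    _ = _ := by ring

lemma abs_netFac_sub_le {n d ℓ m : ℕ} (X : Fin n → Fin d → ℝ) (C : Fin ℓ → Fin d → ℝ)
    (v : Fin m → ℝ) (hv : ∀ r, |v r| ≤ 1) (B B' : Fin m → Fin ℓ → ℝ) (i : Fin n) (δ : ℝ)
    (hδ : ∀ r, |dot (B' r) (mvec C (X i)) - dot (B r) (mvec C (X i))| ≤ δ) :
    |netFac X C v B' i - netFac X C v B i| ≤ Real.sqrt m * δ := by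
  have hsum : |∑ r, v r * (max 0 (dot (B' r) (mvec C (X i))) - max 0 (dot (B r) (mvec C (X i))))|
      ≤ m * δ := by
    refine (Finset.abs_sum_le_sum_abs _ _).trans ?_
    calc _ ≤ ∑ _r : Fin m, δ := Finset.sum_le_sum fun r _ => by
            rw [abs_mul, ← one_mul δ]
            exact mul_le_mul (hv r) ((abs_relu_sub_relu_le _ _).trans (hδ r))
              (abs_nonneg _) zero_le_one
      _ = m * δ := by simp
  calc |netFac X C v B' i - netFac X C v B i|
      = (Real.sqrt m)⁻¹ * |∑ r, v r *
          (max 0 (dot (B' r) (mvec C (X i))) - max 0 (dot (B r) (mvec C (X i))))| := by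
        simp only [netFac, ← mul_sub, ← Finset.sum_sub_distrib, abs_mul, abs_inv,
          abs_of_nonneg (Real.sqrt_nonneg _)]
    _ ≤ (Real.sqrt m)⁻¹ * (m * δ) := by gcongr
    _ = m / Real.sqrt m * δ := by ring
    _ = Real.sqrt m * δ := by rw [Real.div_sqrt]

lemma sum_sq_le_of_abs_le {n : ℕ} (a : Fin n → ℝ) (c : ℝ) (h : ∀ i, |a i| ≤ c) :
    ∑ i, a i ^ 2 ≤ n * c ^ 2 := by
  calc ∑ i, a i ^ 2 ≤ ∑ _i : Fin n, c ^ 2 :=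
        Finset.sum_le_sum fun i _ => sq_le_sq' (abs_le.mp (h i)).1 (abs_le.mp (h i)).2
    _ = n * c ^ 2 := by simp

lemma sq_sum_abs_le {n : ℕ} (e : Fin n → ℝ) : (∑ j, |e j|) ^ 2 ≤ n * ∑ j, e j ^ 2 := by
  simpa [sq_abs] using sq_sum_le_card_mul_sum_sq (s := Finset.univ) (f := fun j => |e j|)

theorem stmt10 :
    ∀ (n d ℓ m : ℕ), 0 < m →
    ∀ X : Fin n → Fin d → ℝ, (∀ i, ∑ j, X i j ^ 2 = 1) →
    ∀ C : Fin ℓ → Fin d → ℝ, (∀ i j, |dotC X C i j| ≤ 1) →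
    ∀ v : Fin m → ℝ, (∀ r, v r = 1 ∨ v r = -1) →
    ∀ y : Fin n → ℝ, ∀ η : ℝ, 0 < η →
    ∀ B B' : Fin m → Fin ℓ → ℝ,
    (∀ r, B' r = fun q => B r q - η * gradFac X C v y B r q) →
    ∑ i, (netFac X C v B' i - netFac X C v B i) ^ 2 ≤
      η ^ 2 * (n : ℝ) ^ 2 * ∑ i, (y i - netFac X C v B i) ^ 2 := by
  intro n d ℓ m hm X _ C hC v hv y η hη B B' hB'
  set S := ∑ j, |y j - netFac X C v B j|
  have hv1 : ∀ r, |v r| ≤ 1 := fun r => by rcases hv r with h | h <;> simp [h]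
  have hpre : ∀ r i, |dot (B' r) (mvec C (X i)) - dot (B r) (mvec C (X i))| ≤
      η * ((Real.sqrt m)⁻¹ * S) := fun r i => by
    rw [hB' r, dot_sub_smul_left, abs_mul, abs_neg, abs_of_pos hη]
    exact mul_le_mul_of_nonneg_left
      (abs_dot_gradFac_mvec_le X C v y B r i (hv1 r) fun j => hC j i) hη.le
  have hout : ∀ i, |netFac X C v B' i - netFac X C v B i| ≤ η * S := fun i => by
    have hsm : Real.sqrt m ≠ 0 := (Real.sqrt_pos.mpr (Nat.cast_pos.mpr hm)).ne'
    convert abs_netFac_sub_le X C v hv1 B B' i _ (hpre · i) using 1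
    field_simp
  calc ∑ i, (netFac X C v B' i - netFac X C v B i) ^ 2 ≤ n * (η * S) ^ 2 :=
        sum_sq_le_of_abs_le _ _ hout
    _ = η ^ 2 * n * S ^ 2 := by ring
    _ ≤ η ^ 2 * n * (n * ∑ i, (y i - netFac X C v B i) ^ 2) := by
        gcongr
        exact sq_sum_abs_le _
    _ = η ^ 2 * (n : ℝ) ^ 2 * ∑ i, (y i - netFac X C v B i) ^ 2 := by ring

end
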